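/- arXiv:0805.0094 — 4 statements merged into one kernel-verified Lean document; each statement's English description precedes it below -/
import Mathlib

section
/- Let N and k be positive integers with N dividing k, write m = k/N, and let ζ = exp(πi/(2N)) ∈ ℂ. Then the function A ↦ (−1)^(N−1) · (A^(2kN) − A^(−2kN)) / (A^(2k) − A^(−2k)) tends to (−1)^(N−1+k−m) · N as A tends to ζ within the set {A ∈ ℂ : A ≠ 0 and A^(2k) ≠ A^(−2k)}. -/
/-!
Put `x = A ^ (2k)`. The ratio is `(-1)^(N-1) (x^N - x^(-N)) / (x - x^(-1))`, and the identity
`x^N - x^(-N) = (x - x^(-1)) · x^(-(N-1)) · (1 + x^2 + ⋯ + x^(2(N-1)))` removes the singularity: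
the right-hand factor is continuous at every `x ≠ 0`. At `A = exp(πi/(2N))` with `k = Nm` we get
`x = (-1)^m`, so `x^2 = 1`, the geometric sum is `N`, and the limit is
`(-1)^(N-1) (-1)^(m(N-1)) N = (-1)^((N-1)(m+1)) N`.
-/

open Complex Filter Finset Topology

theorem pow_sub_inv_pow_eq_mul_geom_sum {K : Type*} [Field K] (x : K) (n : ℕ) :
    x ^ n - x⁻¹ ^ n = (x - x⁻¹) * (x⁻¹ ^ (n - 1) * ∑ i ∈ range n, (x ^ 2) ^ i) := by
  rcases n with _ | n
  · simp
  rcases eq_or_ne x 0 with rfl | hx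
  · simp
  have hx2 : x⁻¹ * x ^ 2 = x := by rw [sq, inv_mul_cancel_left₀ hx]
  calc x ^ (n + 1) - x⁻¹ ^ (n + 1) = x⁻¹ ^ (n + 1) * ((x ^ 2) ^ (n + 1) - 1) := by
        rw [mul_sub, ← mul_pow, hx2, mul_one]
    _ = x⁻¹ ^ (n + 1) * ((∑ i ∈ range (n + 1), (x ^ 2) ^ i) * (x ^ 2 - 1)) := by
        rw [geom_sum_mul]
    _ = (x - x⁻¹) * (x⁻¹ ^ n * ∑ i ∈ range (n + 1), (x ^ 2) ^ i) := by
        linear_combination (x⁻¹ ^ n * ∑ i ∈ range (n + 1), (x ^ 2) ^ i) * hx2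

theorem tendsto_pow_sub_inv_pow_div_sub_inv {K : Type*} [NormedField K] {y : K} (hy : y ^ 2 = 1)
    (n : ℕ) :
    Tendsto (fun x => (x ^ n - x⁻¹ ^ n) / (x - x⁻¹)) (𝓝[{x | x ≠ x⁻¹}] y)
      (𝓝 (y ^ (n - 1) * n)) := by
  have hy0 : y ≠ 0 := by rintro rfl; simp at hy
  have hcont : ContinuousAt (fun x : K => x⁻¹ ^ (n - 1) * ∑ i ∈ range n, (x ^ 2) ^ i) y :=
    ((continuousAt_inv₀ hy0).pow _).mul (by fun_prop)
  have hval : y⁻¹ ^ (n - 1) * ∑ i ∈ range n, (y ^ 2) ^ i = y ^ (n - 1) * n := by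
    rw [hy, inv_eq_of_mul_eq_one_right (by rw [← sq, hy])]
    simp
  refine (hval ▸ hcont.continuousWithinAt.tendsto).congr' ?_
  filter_upwards [self_mem_nhdsWithin] with x hx
  rw [pow_sub_inv_pow_eq_mul_geom_sum, mul_div_cancel_left₀ _ (sub_ne_zero.2 hx)]

theorem exp_pi_mul_I_div_pow {N : ℕ} (hN : N ≠ 0) (m : ℕ) :
    exp (Real.pi * I / (2 * N)) ^ (2 * N * m) = (-1) ^ m := by
  rw [pow_mul, ← exp_nat_mul]
  push_cast
  rw [mul_div_cancel₀ _ (by exact_mod_cast (by omega : 2 * N ≠ 0)), exp_pi_mul_I]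

theorem ring_lemma_dvd_general (N k m : ℕ) (hN : 0 < N) (hdvd : N ∣ k)
    (hm : m = k / N) :
    Tendsto
      (fun A : ℂ =>
        (-1 : ℂ) ^ (N - 1) * (A ^ (2 * k * N : ℤ) - A ^ (-(2 * k * N : ℤ))) /
          (A ^ (2 * k : ℤ) - A ^ (-(2 * k : ℤ))))
      (nhdsWithin (Complex.exp (Real.pi * Complex.I / (2 * N)))
        {A : ℂ | A ≠ 0 ∧ A ^ (2 * k : ℤ) ≠ A ^ (-(2 * k : ℤ))})
      (nhds ((-1 : ℂ) ^ ((N : ℤ) - 1 + k - m) * N)) := by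
  obtain ⟨j, rfl⟩ := hdvd
  rw [Nat.mul_div_cancel_left _ hN] at hm
  subst hm
  set ζ := exp (Real.pi * I / (2 * N))
  have hζ : ζ ^ (2 * (N * m : ℕ) : ℤ) = (-1) ^ m := by
    rw [← exp_pi_mul_I_div_pow hN.ne' m, ← zpow_natCast]
    push_cast
    rw [mul_assoc]
  have hsq : ((-1 : ℂ) ^ m) ^ 2 = 1 := by rw [← pow_mul, mul_comm, pow_mul]; simp
  have hpow : Tendsto (fun A : ℂ => A ^ (2 * (N * m : ℕ) : ℤ))
      (𝓝[{A : ℂ | A ≠ 0 ∧ A ^ (2 * (N * m : ℕ) : ℤ) ≠ A ^ (-(2 * (N * m : ℕ) : ℤ))}] ζ)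
      (𝓝[{x | x ≠ x⁻¹}] ((-1) ^ m)) := by
    refine tendsto_nhdsWithin_iff.2 ⟨?_, eventually_nhdsWithin_of_forall fun A hA => ?_⟩
    · exact hζ ▸ ((continuousAt_zpow₀ _ _ (Or.inl (exp_ne_zero _))).continuousWithinAt).tendsto
    · rw [Set.mem_ofPred_eq, ← zpow_neg]; exact hA.2
  have hval : (-1 : ℂ) ^ (N - 1) * (((-1) ^ m) ^ (N - 1) * N)
      = (-1) ^ ((N : ℤ) - 1 + (N * m : ℕ) - m) * N := by
    rw [show (N : ℤ) - 1 + (N * m : ℕ) - m = ((N - 1) * (m + 1) : ℕ) by push_cast [hN]; ring,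
      zpow_natCast]
    ring
  rw [← hval]
  convert ((tendsto_pow_sub_inv_pow_div_sub_inv hsq N).comp hpow).const_mul ((-1 : ℂ) ^ (N - 1))
    using 2 with A
  simp only [Function.comp_apply, mul_div_assoc, ← zpow_natCast, ← zpow_neg, ← zpow_mul, neg_mul]

/-- Ring Lemma, case `N ∣ k`: the function
`A ↦ (−1)^(N−1) · (A^(2kN) − A^(−2kN)) / (A^(2k) − A^(−2k))`
tends to `(−1)^(N−1+k−m) · N` (with `m = k/N`) as `A → exp(πi/(2N))`
within the set where `A ≠ 0` and `A^(2k) ≠ A^(−2k)`. -/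
theorem ring_lemma_dvd (N k m : ℕ) (hN : 0 < N) (hk : 0 < k) (hdvd : N ∣ k)
    (hm : m = k / N) :
    Tendsto
      (fun A : ℂ =>
        (-1 : ℂ) ^ (N - 1) * (A ^ (2 * k * N : ℤ) - A ^ (-(2 * k * N : ℤ))) /
          (A ^ (2 * k : ℤ) - A ^ (-(2 * k : ℤ))))
      (nhdsWithin (Complex.exp (Real.pi * Complex.I / (2 * N)))
        {A : ℂ | A ≠ 0 ∧ A ^ (2 * k : ℤ) ≠ A ^ (-(2 * k : ℤ))})
      (nhds ((-1 : ℂ) ^ ((N : ℤ) - 1 + k - m) * N)) :=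
  ring_lemma_dvd_general N k m hN hdvd hm
end

section
/- Let k ≥ 1 be an integer and set N = 2k+1 and ζ = exp(πi/(2N)) ∈ ℂ. Then the function A ↦ (−1)^(3k) · [3k+1]!_A · ([k]!_A)^3 / ([2k+1]_A · ([2k]!_A)^3) tends to 1 as A tends to ζ within the set {A ∈ ℂ : A ≠ 0 and A^(2j) ≠ A^(−2j) for every integer j with 1 ≤ j ≤ 3k+1}. -/
/-!
With `N = 2k + 1` and `ζ = exp(πi/(2N))`, the identity `ζ^(2N) = -1` gives `[N + i] = -[i]` and
`[N - i] = [i]` at `ζ`. Hence `[2k]! = ([k]!)^2` and `[N + 1] ⋯ [N + k] = (-1)^k [k]!`, while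
`[1], …, [2k]` are nonzero because `ζ^4` is a primitive `N`-th root of unity. Away from `ζ` the
factor `[N]` of `[3k+1]!`, which vanishes at `ζ`, cancels against the denominator; what remains
is continuous at `ζ` with value `(-1)^(3k) (-1)^k = 1`.
-/

open Complex Filter Finset

/-- The quantum integer `[m]_A = (A^(2m) − A^(−2m))/(A^2 − A^(−2))`. -/
noncomputable def qint (A : ℂ) (m : ℕ) : ℂ :=
  (A ^ (2 * m : ℤ) - A ^ (-(2 * m : ℤ))) / (A ^ (2 : ℤ) - A ^ (-2 : ℤ))

/-- The quantum factorial `[m]!_A = ∏_{j=1}^m [j]_A`. -/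
noncomputable def qfact (A : ℂ) (m : ℕ) : ℂ :=
  ∏ j ∈ Finset.Icc 1 m, qint A j

section QuantumArithmetic

variable {A : ℂ}

theorem qint_ne_zero {m : ℕ} (hm : A ^ (2 * m : ℤ) ≠ A ^ (-(2 * m : ℤ)))
    (h1 : A ^ (2 : ℤ) ≠ A ^ (-2 : ℤ)) : qint A m ≠ 0 :=
  div_ne_zero (sub_ne_zero.2 hm) (sub_ne_zero.2 h1)

theorem qfact_succ (A : ℂ) (n : ℕ) : qfact A (n + 1) = qfact A n * qint A (n + 1) :=
  prod_Icc_succ_top (Nat.le_add_left 1 n) _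

theorem qfact_ne_zero {n : ℕ} (h : ∀ j, 1 ≤ j → j ≤ n → qint A j ≠ 0) : qfact A n ≠ 0 :=
  prod_ne_zero_iff.2 fun j hj => h j (mem_Icc.1 hj).1 (mem_Icc.1 hj).2

theorem qfact_add (A : ℂ) (m n : ℕ) :
    qfact A (m + n) = qfact A m * ∏ j ∈ range n, qint A (m + j + 1) := by
  induction n with
  | zero => simp
  | succ n ih => rw [← add_assoc, qfact_succ, ih, prod_range_succ, mul_assoc]

theorem qfact_eq_prod_range (A : ℂ) (n : ℕ) : qfact A n = ∏ j ∈ range n, qint A (j + 1) := by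
  simpa [qfact] using qfact_add A 0 n

theorem ne_zero_of_zpow_two_mul_eq_neg_one {N : ℕ} (hA : A ^ (2 * N : ℤ) = -1) : A ≠ 0 := by
  rintro rfl
  rcases N.eq_zero_or_pos with rfl | hN
  · norm_num at hA
  · rw [zero_zpow _ (by positivity)] at hA
    norm_num at hA

theorem qint_add_of_zpow_eq_neg_one {N : ℕ} (hA : A ^ (2 * N : ℤ) = -1) (i : ℕ) :
    qint A (N + i) = -qint A i := by
  have hA0 := ne_zero_of_zpow_two_mul_eq_neg_one hA
  have hinv : A ^ (-(2 * N : ℤ)) = -1 := by rw [zpow_neg, hA, inv_neg, inv_one]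
  have hpos : A ^ (2 * (N + i : ℕ) : ℤ) = -A ^ (2 * i : ℤ) := by
    rw [show (2 * (N + i : ℕ) : ℤ) = 2 * N + 2 * i by push_cast; ring, zpow_add₀ hA0, hA,
      neg_one_mul]
  have hneg : A ^ (-(2 * (N + i : ℕ) : ℤ)) = -A ^ (-(2 * i : ℤ)) := by
    rw [show -(2 * (N + i : ℕ) : ℤ) = -(2 * N) + -(2 * i) by push_cast; ring, zpow_add₀ hA0,
      hinv, neg_one_mul]
  rw [qint, qint, hpos, hneg]
  ring

theorem qint_sub_of_zpow_eq_neg_one {N i : ℕ} (hA : A ^ (2 * N : ℤ) = -1) (hi : i ≤ N) :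
    qint A (N - i) = qint A i := by
  have hA0 := ne_zero_of_zpow_two_mul_eq_neg_one hA
  have hinv : A ^ (-(2 * N : ℤ)) = -1 := by rw [zpow_neg, hA, inv_neg, inv_one]
  have hpos : A ^ (2 * (N - i : ℕ) : ℤ) = -A ^ (-(2 * i : ℤ)) := by
    rw [show (2 * (N - i : ℕ) : ℤ) = 2 * N + -(2 * i) by push_cast [hi]; ring, zpow_add₀ hA0,
      hA, neg_one_mul]
  have hneg : A ^ (-(2 * (N - i : ℕ) : ℤ)) = -A ^ (2 * i : ℤ) := by
    rw [show -(2 * (N - i : ℕ) : ℤ) = -(2 * N) + 2 * i by push_cast [hi]; ring, zpow_add₀ hA0,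
      hinv, neg_one_mul]
  rw [qint, qint, hpos, hneg]
  ring

theorem prod_qint_add_of_zpow_eq_neg_one {N : ℕ} (hA : A ^ (2 * N : ℤ) = -1) (n : ℕ) :
    ∏ j ∈ range n, qint A (N + j + 1) = (-1) ^ n * qfact A n := by
  induction n with
  | zero => simp [qfact]
  | succ n ih =>
    rw [prod_range_succ, ih, qfact_succ, add_assoc, qint_add_of_zpow_eq_neg_one hA]
    ring

/-- The reflection `j ↦ 2k + 1 - j` pairs the factors of `[2k]!` off into two copies of `[k]!`. -/
theorem qfact_two_mul_of_zpow_eq_neg_one {k : ℕ} (hA : A ^ (2 * (2 * k + 1 : ℕ) : ℤ) = -1) :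
    qfact A (2 * k) = qfact A k ^ 2 := by
  have hupper : ∏ j ∈ range k, qint A (k + j + 1) = qfact A k := by
    rw [qfact_eq_prod_range, ← prod_range_reflect]
    refine prod_congr rfl fun j hj => ?_
    have hj : j < k := mem_range.1 hj
    rw [show k + (k - 1 - j) + 1 = 2 * k + 1 - (j + 1) by omega,
      qint_sub_of_zpow_eq_neg_one hA (by omega)]
  rw [two_mul, qfact_add, hupper, sq]

end QuantumArithmetic

section RootOfUnity

theorem exp_pi_mul_I_div_zpow_two_mul (N : ℕ) (hN : N ≠ 0) :
    exp (Real.pi * I / (2 * N)) ^ (2 * N : ℤ) = -1 := by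
  rw [show (2 * N : ℤ) = ((2 * N : ℕ) : ℤ) by push_cast; rfl, zpow_natCast, ← exp_nat_mul]
  have : (N : ℂ) ≠ 0 := Nat.cast_ne_zero.2 hN
  rw [show ((2 * N : ℕ) : ℂ) * (Real.pi * I / (2 * N)) = Real.pi * I by push_cast; field_simp]
  exact exp_pi_mul_I

theorem isPrimitiveRoot_exp_pi_mul_I_div_pow_four (N : ℕ) (hN : N ≠ 0) :
    IsPrimitiveRoot (exp (Real.pi * I / (2 * N)) ^ 4) N := by
  have : (N : ℂ) ≠ 0 := Nat.cast_ne_zero.2 hN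
  rw [← exp_nat_mul, show ((4 : ℕ) : ℂ) * (Real.pi * I / (2 * N)) = 2 * Real.pi * I / N by
    push_cast; field_simp; ring]
  exact isPrimitiveRoot_exp N hN

theorem zpow_two_mul_ne_zpow_neg_of_isPrimitiveRoot {A : ℂ} {N m : ℕ} (hA : A ≠ 0)
    (h : IsPrimitiveRoot (A ^ 4) N) (hm : ¬ N ∣ m) : A ^ (2 * m : ℤ) ≠ A ^ (-(2 * m : ℤ)) := by
  intro heq
  refine hm (h.dvd_of_pow_eq_one m ?_)
  rw [← pow_mul, ← zpow_natCast, show ((4 * m : ℕ) : ℤ) = 2 * m - -(2 * m) by push_cast; ring,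
    zpow_sub₀ hA, heq, div_self (zpow_ne_zero _ hA)]

theorem zpow_two_ne_zpow_neg_two_of_isPrimitiveRoot {A : ℂ} {N : ℕ} (hA : A ≠ 0)
    (h : IsPrimitiveRoot (A ^ 4) N) (hN : N ≠ 1) : A ^ (2 : ℤ) ≠ A ^ (-2 : ℤ) := by
  simpa using zpow_two_mul_ne_zpow_neg_of_isPrimitiveRoot (m := 1) hA h (by rwa [Nat.dvd_one])

theorem qint_ne_zero_of_isPrimitiveRoot {A : ℂ} {N m : ℕ} (hA : A ≠ 0)
    (h : IsPrimitiveRoot (A ^ 4) N) (hN : N ≠ 1) (hm : ¬ N ∣ m) : qint A m ≠ 0 :=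
  qint_ne_zero (zpow_two_mul_ne_zpow_neg_of_isPrimitiveRoot hA h hm)
    (zpow_two_ne_zpow_neg_two_of_isPrimitiveRoot hA h hN)

end RootOfUnity

section Continuity

variable {A : ℂ}

theorem continuousAt_qint (h : A ^ (2 : ℤ) ≠ A ^ (-2 : ℤ)) (m : ℕ) :
    ContinuousAt (fun B => qint B m) A := by
  have hA : A ≠ 0 := by rintro rfl; simp at h
  have hpow (n : ℤ) : ContinuousAt (fun B : ℂ => B ^ n) A := continuousAt_zpow₀ A n (.inl hA)
  exact ((hpow _).sub (hpow _)).div ((hpow _).sub (hpow _)) (sub_ne_zero.2 h)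

theorem continuousAt_qfact (h : A ^ (2 : ℤ) ≠ A ^ (-2 : ℤ)) (m : ℕ) :
    ContinuousAt (fun B => qfact B m) A :=
  tendsto_finsetProd _ fun j _ => continuousAt_qint h j

end Continuity

/-- The theta ratio with the factor `[2k+1]`, which vanishes at `exp(πi/(2(2k+1)))`, cancelled
from numerator and denominator. -/
noncomputable def reducedThetaRatio (k : ℕ) (A : ℂ) : ℂ :=
  (-1) ^ (3 * k) * (∏ j ∈ range k, qint A (2 * k + 1 + j + 1)) * qfact A k ^ 3 /
    qfact A (2 * k) ^ 2

theorem theta_ratio_eq_reducedThetaRatio {k : ℕ} {A : ℂ}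
    (hA : ∀ j : ℕ, 1 ≤ j → j ≤ 3 * k + 1 → A ^ (2 * j : ℤ) ≠ A ^ (-(2 * j : ℤ))) :
    (-1 : ℂ) ^ (3 * k) * qfact A (3 * k + 1) * qfact A k ^ 3 /
        (qint A (2 * k + 1) * qfact A (2 * k) ^ 3) = reducedThetaRatio k A := by
  have hq : ∀ j, 1 ≤ j → j ≤ 3 * k + 1 → qint A j ≠ 0 := fun j h1 h2 =>
    qint_ne_zero (hA j h1 h2) (by simpa using hA 1 le_rfl (by omega))
  have hN : qint A (2 * k + 1) ≠ 0 := hq _ (by omega) (by omega)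
  have h2k : qfact A (2 * k) ≠ 0 := qfact_ne_zero fun j h1 h2 => hq j h1 (by omega)
  rw [reducedThetaRatio, show 3 * k + 1 = 2 * k + 1 + k by ring, qfact_add, qfact_succ]
  field_simp

theorem reducedThetaRatio_eq_one {k : ℕ} {A : ℂ} (hA : A ^ (2 * (2 * k + 1 : ℕ) : ℤ) = -1)
    (hk : qfact A k ≠ 0) : reducedThetaRatio k A = 1 := by
  rw [reducedThetaRatio, prod_qint_add_of_zpow_eq_neg_one hA,
    qfact_two_mul_of_zpow_eq_neg_one hA]
  field_simp
  rw [← pow_add, show 3 * k + k = 2 * (2 * k) by ring, pow_mul, neg_one_sq, one_pow]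

theorem continuousAt_reducedThetaRatio {k : ℕ} {A : ℂ} (h : A ^ (2 : ℤ) ≠ A ^ (-2 : ℤ))
    (h2k : qfact A (2 * k) ≠ 0) : ContinuousAt (reducedThetaRatio k) A :=
  ((continuousAt_const.mul (tendsto_finsetProd _ fun _ _ => continuousAt_qint h _)).mul
    ((continuousAt_qfact h k).pow 3)).div ((continuousAt_qfact h (2 * k)).pow 2)
    (pow_ne_zero 2 h2k)

/-- For `N = 2k+1`, the ratio `⟨N N N⟩/⟨N⟩ = (−1)^{3k}[3k+1]!([k]!)^3/([2k+1]([2k]!)^3)`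
tends to `1` as `A → exp(πi/(2N))` within the set of nonzero `A` with
`A^(2j) ≠ A^(−2j)` for `1 ≤ j ≤ 3k+1`. -/
theorem theta_ratio_tendsto_one (k : ℕ) (hk : 1 ≤ k) :
    Tendsto
      (fun A : ℂ =>
        (-1 : ℂ) ^ (3 * k) * qfact A (3 * k + 1) * (qfact A k) ^ 3 /
          (qint A (2 * k + 1) * (qfact A (2 * k)) ^ 3))
      (nhdsWithin (Complex.exp (Real.pi * Complex.I / (2 * (2 * k + 1))))
        {A : ℂ | A ≠ 0 ∧ ∀ j : ℕ, 1 ≤ j → j ≤ 3 * k + 1 →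
          A ^ (2 * j : ℤ) ≠ A ^ (-(2 * j : ℤ))})
      (nhds 1) := by
  rw [show (2 * (2 * k + 1) : ℂ) = 2 * ((2 * k + 1 : ℕ) : ℂ) by push_cast; rfl]
  set ζ := exp (Real.pi * I / (2 * ((2 * k + 1 : ℕ) : ℂ)))
  have hζ0 : ζ ≠ 0 := exp_ne_zero _
  have hprim : IsPrimitiveRoot (ζ ^ 4) (2 * k + 1) :=
    isPrimitiveRoot_exp_pi_mul_I_div_pow_four _ (by omega)
  have hden := zpow_two_ne_zpow_neg_two_of_isPrimitiveRoot hζ0 hprim (by omega)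
  have hq : ∀ j, 1 ≤ j → j ≤ 2 * k → qint ζ j ≠ 0 := fun j h1 h2 =>
    qint_ne_zero_of_isPrimitiveRoot hζ0 hprim (by omega) (Nat.not_dvd_of_pos_of_lt h1 (by omega))
  have hlim : Tendsto (reducedThetaRatio k) (nhds ζ) (nhds 1) := by
    rw [← reducedThetaRatio_eq_one (exp_pi_mul_I_div_zpow_two_mul _ (by omega))
      (qfact_ne_zero fun j h1 h2 => hq j h1 (by omega))]
    exact continuousAt_reducedThetaRatio hden (qfact_ne_zero hq)
  refine (hlim.mono_left nhdsWithin_le_nhds).congr' ?_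
  filter_upwards [self_mem_nhdsWithin] with A hA
  exact (theta_ratio_eq_reducedThetaRatio hA.2).symm
end

section
/- Work in the ring ℤ[A, A^{−1}] of Laurent polynomials over ℤ in one variable A. For an integer j ≥ 1 define the quantum integer [j] = Σ_{i=0}^{j−1} A^{2j−2−4i}, and define the quantum factorial [j]! = ∏_{i=1}^{j} [i]. Then for every integer k ≥ 2, the element ([2k]!)^3 · [2k+1] does not divide the element [3k+1]! · ([k]!)^3 in ℤ[A, A^{−1}]. -/
open LaurentPolynomial

/-- The quantum integer `[j] = Σ_{i=0}^{j−1} A^(2j−2−4i)` in `ℤ[A, A⁻¹]`. -/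
noncomputable def qintL (j : ℕ) : LaurentPolynomial ℤ :=
  ∑ i ∈ Finset.range j, LaurentPolynomial.T (2 * (j : ℤ) - 2 - 4 * (i : ℤ))

/-- The quantum factorial `[j]! = ∏_{i=1}^{j} [i]` in `ℤ[A, A⁻¹]`. -/
noncomputable def qfactL (j : ℕ) : LaurentPolynomial ℤ :=
  ∏ i ∈ Finset.Icc 1 j, qintL i

/-! Multiplying `[j]` by `A^(2j-2)` turns it into the polynomial
`1 + A^4 + ⋯ + A^(4(j-1)) = (A^(4j) - 1) / (A^4 - 1)`, so the divisibility in `ℤ[A, A⁻¹]` would give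
one in `ℂ[A]` up to a power of `A`. At a primitive `8k`-th root of unity `ζ` this polynomial has
a simple zero when `2k ∣ j` (`A^(4j) - 1` is separable) and no zero otherwise (`ζ^4 ≠ 1`), so `[n]!`
vanishes at `ζ` to order `n / 2k`. Hence the divisor vanishes there to order at least `3`, while
the dividend vanishes only to order `(3k+1) / 2k + 3 (k / 2k) = 1` as `k ≥ 2`. -/

open Polynomial Finset

theorem Polynomial.exists_dvd_X_pow_mul_of_toLaurent_dvd {R : Type*} [CommSemiring R]
    {p q : R[X]} (h : toLaurent p ∣ toLaurent q) : ∃ n : ℕ, p ∣ X ^ n * q := by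
  obtain ⟨f, hf⟩ := h
  obtain ⟨n, f', hf'⟩ := f.exists_T_pow
  refine ⟨n, f', toLaurent_injective ?_⟩
  rw [map_mul, map_mul, toLaurent_X_pow, hf, hf']
  ring

theorem Polynomial.rootMultiplicity_prod {R ι : Type*} [CommRing R] [IsDomain R]
    {s : Finset ι} {f : ι → R[X]} (hf : ∀ i ∈ s, f i ≠ 0) (a : R) :
    rootMultiplicity a (∏ i ∈ s, f i) = ∑ i ∈ s, rootMultiplicity a (f i) := by
  classical
  rw [← count_roots, roots_prod _ _ (prod_ne_zero_iff.2 hf), Multiset.count_bind,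
    sum_eq_multiset_sum]
  simp only [count_roots]

theorem Polynomial.rootMultiplicity_pow {R : Type*} [CommRing R] [IsDomain R]
    (p : R[X]) (a : R) (n : ℕ) :
    rootMultiplicity a (p ^ n) = n * rootMultiplicity a p := by
  classical
  rw [← count_roots, roots_pow, Multiset.count_nsmul, count_roots]

theorem Polynomial.rootMultiplicity_X_pow_mul {R : Type*} [CommRing R] [IsDomain R] {a : R}
    (ha : a ≠ 0) {p : R[X]} (hp : p ≠ 0) (n : ℕ) :
    rootMultiplicity a (X ^ n * p) = rootMultiplicity a p := by
  rw [rootMultiplicity_mul (mul_ne_zero (pow_ne_zero _ X_ne_zero) hp), rootMultiplicity_pow,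
    rootMultiplicity_eq_zero (by simpa using ha), mul_zero, zero_add]

theorem Polynomial.rootMultiplicity_X_pow_sub_one {K : Type*} [Field K] [CharZero K]
    [DecidableEq K] {n : ℕ} (hn : n ≠ 0) (ζ : K) :
    rootMultiplicity ζ (X ^ n - 1 : K[X]) = if ζ ^ n = 1 then 1 else 0 := by
  split_ifs with h
  · refine le_antisymm (rootMultiplicity_le_one_of_separable
      (X_pow_sub_one_separable_iff.2 (Nat.cast_ne_zero.2 hn)) ζ) ?_
    exact (rootMultiplicity_pos (X_pow_sub_C_ne_zero (Nat.pos_of_ne_zero hn) 1)).2 (by simp [h])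
  · exact rootMultiplicity_eq_zero (by simp [sub_eq_zero, h])

noncomputable def qintPoly (R : Type*) [Semiring R] (j : ℕ) : R[X] :=
  ∑ i ∈ range j, X ^ (4 * i)

noncomputable def qfactPoly (R : Type*) [CommSemiring R] (n : ℕ) : R[X] :=
  ∏ i ∈ Icc 1 n, qintPoly R i

theorem toLaurent_qintPoly (j : ℕ) :
    toLaurent (qintPoly ℤ j) = T (2 * (j : ℤ) - 2) * qintL j := by
  rw [qintPoly, qintL, map_sum, mul_sum, ← sum_range_reflect]
  refine sum_congr rfl fun i hi => ?_
  rw [toLaurent_X_pow, ← T_add]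
  congr 1
  have := mem_range.1 hi
  omega

theorem associated_toLaurent_qintPoly (j : ℕ) :
    Associated (toLaurent (qintPoly ℤ j)) (qintL j) := by
  rw [toLaurent_qintPoly]
  exact (associated_isUnit_mul_left_iff (isUnit_T _)).2 (Associated.refl _)

theorem associated_toLaurent_qfactPoly (n : ℕ) :
    Associated (toLaurent (qfactPoly ℤ n)) (qfactL n) := by
  rw [qfactPoly, map_prod]
  exact Associated.prod _ _ _ fun j _ => associated_toLaurent_qintPoly j

theorem map_qintPoly {R S : Type*} [Semiring R] [Semiring S] (f : R →+* S) (j : ℕ) :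
    (qintPoly R j).map f = qintPoly S j := by
  simp [qintPoly, Polynomial.map_sum]

theorem map_qfactPoly {R S : Type*} [CommSemiring R] [CommSemiring S] (f : R →+* S) (n : ℕ) :
    (qfactPoly R n).map f = qfactPoly S n := by
  simp [qfactPoly, Polynomial.map_prod, map_qintPoly]

theorem qintPoly_mul_X_pow_four_sub_one {R : Type*} [CommRing R] (j : ℕ) :
    qintPoly R j * (X ^ 4 - 1) = X ^ (4 * j) - 1 := by
  simp only [qintPoly, pow_mul, geom_sum_mul]

theorem qintPoly_ne_zero {R : Type*} [CommRing R] [Nontrivial R] {j : ℕ} (hj : j ≠ 0) :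
    qintPoly R j ≠ 0 :=
  left_ne_zero_of_mul (b := X ^ 4 - 1) <| by
    rw [qintPoly_mul_X_pow_four_sub_one]
    exact X_pow_sub_C_ne_zero (by omega) 1

theorem qfactPoly_ne_zero {R : Type*} [CommRing R] [IsDomain R] (n : ℕ) :
    qfactPoly R n ≠ 0 :=
  prod_ne_zero_iff.2 fun _ hj => qintPoly_ne_zero (by simp at hj; omega)

section PrimitiveRoot

variable {K : Type*} [Field K] [CharZero K] {m : ℕ} {ζ : K}

theorem rootMultiplicity_qintPoly (hζ : IsPrimitiveRoot ζ (4 * m)) (hm : 1 < m) {j : ℕ}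
    (hj : j ≠ 0) : rootMultiplicity ζ (qintPoly K j) = if m ∣ j then 1 else 0 := by
  classical
  have hζ4 : ¬ (X ^ 4 - 1 : K[X]).IsRoot ζ := by
    simpa [sub_eq_zero] using hζ.pow_ne_one_of_pos_of_lt (by norm_num) (by omega)
  have hprod := qintPoly_mul_X_pow_four_sub_one (R := K) j
  have hmul : rootMultiplicity ζ (X ^ (4 * j) - 1) = rootMultiplicity ζ (qintPoly K j) := by
    rw [← hprod, rootMultiplicity_mul (hprod ▸ X_pow_sub_C_ne_zero (by omega) 1),
      rootMultiplicity_eq_zero hζ4, add_zero]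
  rw [← hmul, rootMultiplicity_X_pow_sub_one (by omega)]
  simp only [hζ.pow_eq_one_iff_dvd, Nat.mul_dvd_mul_iff_left four_pos]

theorem rootMultiplicity_qfactPoly (hζ : IsPrimitiveRoot ζ (4 * m)) (hm : 1 < m) (n : ℕ) :
    rootMultiplicity ζ (qfactPoly K n) = n / m := by
  have hpos : ∀ j ∈ Icc 1 n, j ≠ 0 := fun j hj => by simp at hj; omega
  rw [qfactPoly, rootMultiplicity_prod fun j hj => qintPoly_ne_zero (hpos j hj),
    sum_congr rfl fun j hj => rootMultiplicity_qintPoly hζ hm (hpos j hj), sum_boole,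
    Nat.cast_id, ← Nat.Ioc_filter_dvd_card_eq_div, ← Icc_add_one_left_eq_Ioc, zero_add]

end PrimitiveRoot

/-- For every `k ≥ 2`, `([2k]!)^3·[2k+1]` does not divide `[3k+1]!·([k]!)^3`
in the ring of Laurent polynomials `ℤ[A, A⁻¹]`: the normalized colored Jones
invariant of the theta graph is not a Laurent polynomial for odd `N = 2k+1 > 3`. -/
theorem theta_not_laurent (k : ℕ) (hk : 2 ≤ k) :
    ¬ ((qfactL (2 * k)) ^ 3 * qintL (2 * k + 1) ∣ qfactL (3 * k + 1) * (qfactL k) ^ 3) := by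
  intro hdvd
  have hden := ((associated_toLaurent_qfactPoly (2 * k)).pow_pow (n := 3)).mul_mul
    (associated_toLaurent_qintPoly (2 * k + 1))
  have hnum := (associated_toLaurent_qfactPoly (3 * k + 1)).mul_mul
    ((associated_toLaurent_qfactPoly k).pow_pow (n := 3))
  simp only [← map_pow, ← map_mul] at hden hnum
  obtain ⟨n, hn⟩ := exists_dvd_X_pow_mul_of_toLaurent_dvd
    (hden.dvd_iff_dvd_left.2 (hnum.dvd_iff_dvd_right.2 hdvd))
  have hC := Polynomial.map_dvd (Int.castRingHom ℂ) ((dvd_mul_right _ _).trans hn)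
  simp only [Polynomial.map_mul, Polynomial.map_pow, Polynomial.map_X, map_qfactPoly] at hC
  obtain ⟨ζ, hζ⟩ : ∃ ζ : ℂ, IsPrimitiveRoot ζ (4 * (2 * k)) :=
    ⟨_, Complex.isPrimitiveRoot_exp _ (by omega)⟩
  have hle := rootMultiplicity_le_rootMultiplicity_of_dvd (by simp [qfactPoly_ne_zero]) hC ζ
  rw [rootMultiplicity_X_pow_mul (hζ.ne_zero (by omega)) (by simp [qfactPoly_ne_zero]),
    rootMultiplicity_mul (by simp [qfactPoly_ne_zero])] at hle
  simp only [rootMultiplicity_pow, rootMultiplicity_qfactPoly hζ (by omega : 1 < 2 * k)] at hle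
  rw [Nat.div_self (by omega), Nat.div_eq_of_lt (by omega : k < 2 * k),
    Nat.div_eq_of_lt_le (by omega : 1 * (2 * k) ≤ 3 * k + 1) (by omega)] at hle
  omega
end

section
/- For an odd integer N = 2m+1 ≥ 3 define s_N(j) = ∏_{i=1}^{j} (sin(iπ/N)/sin(π/N)) for 0 ≤ j ≤ m, and define sixj_N = Σ_{k=0}^{m} ( s_N(m)/(s_N(k)·s_N(m−k)) )^4, a positive real number. Then the sequence n ↦ (2π/(2n+1)) · log( sixj_{2n+1} ) converges, as n → ∞, to −16·∫_{0}^{π/4} log(2 sin u) du. -/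
/-!
All terms of `sixj_N` are positive, so up to an error `log (m + 1) = o(N)` the logarithm of
`sixj_N` is four times the logarithm of its largest term. With
`L(j) = logTwoSinSum m j = ∑_{i=1}^{j} log (2 sin (iπ/N))` one has
`log binom_q(m, k) = L(m) - L(k) - L(m - k)`; as `L` has increasing increments, the largest
term is the middle one, `k = m / 2`.
The product formula `∏_{i=1}^{N-1} 2 sin (iπ/N) = N` together with the symmetry
`sin (π - x) = sin x` gives `L(m) = log N / 2`, and `(π/N) L(m / 2)` is a Riemann sum of the
increasing, integrable function `log (2 sin u)` on `[0, π/4]`.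
-/

open Real Filter

/-- For odd `N = 2m+1`, `s_N(j) = ∏_{i=1}^{j} sin(iπ/N)/sin(π/N)`. -/
noncomputable def sN (m j : ℕ) : ℝ :=
  ∏ i ∈ Finset.Icc 1 j,
    Real.sin (i * Real.pi / (2 * m + 1)) / Real.sin (Real.pi / (2 * m + 1))

/-- For odd `N = 2m+1`, `sixj_N = Σ_{k=0}^{m} ( s_N(m)/(s_N(k)·s_N(m−k)) )^4`. -/
noncomputable def sixjN (m : ℕ) : ℝ :=
  ∑ k ∈ Finset.range (m + 1), (sN m m / (sN m k * sN m (m - k))) ^ 4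

open Topology MeasureTheory Set intervalIntegral

section RiemannSum

variable {f : ℝ → ℝ} {a h : ℝ} {n : ℕ}

lemma IntervalIntegrable.mono_step (hfi : IntervalIntegrable f volume a (a + n * h)) (hh : 0 ≤ h)
    {i : ℕ} (hi : i < n) : IntervalIntegrable f volume (a + i * h) (a + ↑(i + 1) * h) := by
  have : (i + 1 : ℝ) ≤ n := by exact_mod_cast hi
  refine hfi.mono_set (uIcc_subset_uIcc ?_ ?_) <;>
    rw [uIcc_of_le (by nlinarith)] <;> push_cast <;> constructor <;> nlinarith

lemma integral_le_mul_sum_of_monotoneOn (hh : 0 ≤ h) (hf : MonotoneOn f (Ioc a (a + n * h)))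
    (hfi : IntervalIntegrable f volume a (a + n * h)) :
    ∫ x in a..a + n * h, f x ≤ h * ∑ i ∈ Finset.range n, f (a + (i + 1) * h) := by
  calc ∫ x in a..a + n * h, f x
      = ∑ i ∈ Finset.range n, ∫ x in a + i * h..a + ↑(i + 1) * h, f x := by
        rw [sum_integral_adjacent_intervals (a := fun k : ℕ => a + k * h)
          fun i hi => hfi.mono_step hh hi]
        simp
    _ ≤ ∑ i ∈ Finset.range n,
          ∫ _ in a + i * h..a + ↑(i + 1) * h, f (a + (i + 1) * h) := by
        gcongr with i hi
        have : (i + 1 : ℝ) ≤ n := by exact_mod_cast Finset.mem_range.1 hi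
        refine integral_mono_on_of_le_Ioo (by push_cast; nlinarith)
          (hfi.mono_step hh (Finset.mem_range.1 hi)) intervalIntegrable_const
          fun x hx => hf ⟨?_, ?_⟩ ⟨?_, ?_⟩ ?_ <;> push_cast at hx <;> nlinarith [hx.1, hx.2]
    _ = h * ∑ i ∈ Finset.range n, f (a + (i + 1) * h) := by
        rw [Finset.mul_sum]
        refine Finset.sum_congr rfl fun i _ => ?_
        rw [intervalIntegral.integral_const, smul_eq_mul]
        push_cast
        ring

lemma mul_sum_le_integral_of_monotoneOn (hh : 0 ≤ h) (hf : MonotoneOn f (Ico a (a + n * h)))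
    (hfi : IntervalIntegrable f volume a (a + n * h)) :
    h * ∑ i ∈ Finset.range n, f (a + i * h) ≤ ∫ x in a..a + n * h, f x := by
  calc h * ∑ i ∈ Finset.range n, f (a + i * h)
      = ∑ i ∈ Finset.range n, ∫ _ in a + i * h..a + ↑(i + 1) * h, f (a + i * h) := by
        rw [Finset.mul_sum]
        refine Finset.sum_congr rfl fun i _ => ?_
        rw [intervalIntegral.integral_const, smul_eq_mul]
        push_cast
        ring
    _ ≤ ∑ i ∈ Finset.range n, ∫ x in a + i * h..a + ↑(i + 1) * h, f x := by
        gcongr with i hi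
        have : (i + 1 : ℝ) ≤ n := by exact_mod_cast Finset.mem_range.1 hi
        refine integral_mono_on_of_le_Ioo (by push_cast; nlinarith) intervalIntegrable_const
          (hfi.mono_step hh (Finset.mem_range.1 hi))
          fun x hx => hf ⟨?_, ?_⟩ ⟨?_, ?_⟩ ?_ <;> push_cast at hx <;> nlinarith [hx.1, hx.2]
    _ = ∫ x in a..a + n * h, f x := by
        rw [sum_integral_adjacent_intervals (a := fun k : ℕ => a + k * h)
          fun i hi => hfi.mono_step hh hi]
        simp

theorem tendsto_mul_sum_of_monotoneOn {ι : Type*} {l : Filter ι} {b x : ℝ}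
    (hf : MonotoneOn f (Ioc 0 b)) (hfi : IntervalIntegrable f volume 0 b) (hx : x ∈ Ioo 0 b)
    {h : ι → ℝ} {n : ι → ℕ} (hpos : ∀ᶠ i in l, 0 < h i) (hh : Tendsto h l (𝓝 0))
    (hn : Tendsto (fun i => n i * h i) l (𝓝 x)) :
    Tendsto (fun i => h i * ∑ k ∈ Finset.range (n i), f ((k + 1) * h i)) l
      (𝓝 (∫ t in 0..x, f t)) := by
  set F : ℝ → ℝ := fun t => ∫ s in 0..t, f s
  have hb : 0 < b := hx.1.trans hx.2
  have hint : ∀ c ∈ Icc 0 b, IntervalIntegrable f volume 0 c := fun c hc =>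
    hfi.mono_set (uIcc_subset_uIcc_left (by rwa [uIcc_of_le hb.le]))
  have hF : ContinuousOn F (Icc 0 b) := by
    simpa [uIcc_of_le hb.le] using continuousOn_primitive_interval' hfi left_mem_uIcc
  have hFx : ContinuousAt F x := hF.continuousAt (Icc_mem_nhds hx.1 hx.2)
  have hF0 : Tendsto (fun i => F (h i)) l (𝓝 0) := by
    have : Tendsto h l (𝓝[Icc 0 b] 0) := tendsto_nhdsWithin_iff.2 ⟨hh, by
      filter_upwards [hpos, hh.eventually (gt_mem_nhds hb)] with i h0 h1 using ⟨h0.le, h1.le⟩⟩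
    simpa [F, Function.comp_def] using (hF 0 (left_mem_Icc.2 hb.le)).tendsto.comp this
  have hshift : Tendsto (fun i => h i + n i * h i) l (𝓝 x) := by simpa using hh.add hn
  have hlt : ∀ᶠ i in l, h i + n i * h i < b := hshift.eventually (gt_mem_nhds hx.2)
  refine tendsto_of_tendsto_of_tendsto_of_le_of_le' (hFx.tendsto.comp hn)
    (by simpa using (hFx.tendsto.comp hshift).sub hF0) ?_ ?_
  · filter_upwards [hpos, hlt] with i h0 hlt
    have hnb : 0 ≤ n i * h i := by positivity
    simpa [F] using integral_le_mul_sum_of_monotoneOn (a := 0) h0.le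
      (hf.mono (Ioc_subset_Ioc_right (by linarith))) (hint _ ⟨by simpa, by linarith⟩)
  · filter_upwards [hpos, hlt] with i h0 hlt
    have hnb : 0 ≤ n i * h i := by positivity
    have hsum := mul_sum_le_integral_of_monotoneOn (a := h i) h0.le
      (hf.mono fun y hy => ⟨h0.trans_le hy.1, by linarith [hy.2]⟩)
      ((hint _ ⟨h0.le, by linarith⟩).symm.trans (hint _ ⟨by linarith, hlt.le⟩))
    rw [← integral_interval_sub_left (hint _ ⟨by linarith, hlt.le⟩)
      (hint _ ⟨h0.le, by linarith⟩)] at hsum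
    refine le_trans (le_of_eq ?_) hsum
    congr 1
    exact Finset.sum_congr rfl fun k _ => by ring_nf

end RiemannSum

lemma monotoneOn_log_two_mul_sin : MonotoneOn (fun u => log (2 * sin u)) (Ioc 0 (π / 2)) :=
  fun u hu v hv huv => by
    have hsu : 0 < sin u := sin_pos_of_pos_of_lt_pi hu.1 (by linarith [hu.2, pi_pos])
    have : sin u ≤ sin v :=
      sin_le_sin_of_le_of_le_pi_div_two (by linarith [hu.1, pi_pos]) hv.2 huv
    dsimp only
    gcongr

lemma intervalIntegrable_log_two_mul_sin (a b : ℝ) :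
    IntervalIntegrable (fun u => log (2 * sin u)) volume a b :=
  (analyticOnNhd_const.mul analyticOnNhd_sin).meromorphicOn.intervalIntegrable_log

lemma prod_abs_two_mul_sin (n : ℕ) :
    ∏ k ∈ Finset.range n, |2 * sin ((k + 1) * π / (n + 1))| = n + 1 := by
  have hμ := Complex.isPrimitiveRoot_exp (n + 1) n.succ_ne_zero
  have h := congrArg norm hμ.prod_one_sub_pow_eq_order
  rw [norm_prod] at h
  convert h using 1
  · refine Finset.prod_congr rfl fun k _ => ?_
    rw [norm_sub_rev, ← Complex.exp_nat_mul, ← Real.norm_eq_abs]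
    have harg : ((k + 1 : ℕ) : ℂ) * (2 * π * Complex.I / (n + 1 : ℕ)) =
        Complex.I * ((2 * ((k + 1) * π / (n + 1)) : ℝ) : ℂ) := by
      push_cast; ring
    rw [harg, Complex.norm_exp_I_mul_ofReal_sub_one, mul_div_cancel_left₀ _ two_ne_zero]
  · norm_cast

lemma sin_natCast_mul_pi_div_pos {i N : ℕ} (hi : 0 < i) (hiN : i < N) : 0 < sin (i * π / N) := by
  have : (i : ℝ) < N := by exact_mod_cast hiN
  have : (0 : ℝ) < i := by exact_mod_cast hi
  apply sin_pos_of_pos_of_lt_pi (div_pos (by positivity) (by linarith))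
  rw [div_lt_iff₀ (by linarith), mul_comm]
  gcongr

noncomputable def logTwoSinSum (m j : ℕ) : ℝ :=
  ∑ i ∈ Finset.range j, log (2 * sin ((i + 1) * (π / (2 * m + 1))))

namespace SixJ

variable {m j k : ℕ}

lemma sin_mul_pi_div_pos (hj : 0 < j) (hjm : j ≤ 2 * m) : 0 < sin (j * π / (2 * m + 1)) := by
  simpa using sin_natCast_mul_pi_div_pos (N := 2 * m + 1) hj (by omega)

lemma sN_eq_prod_range (m j : ℕ) : sN m j =
    ∏ i ∈ Finset.range j, sin ((i + 1 : ℕ) * π / (2 * m + 1)) / sin (π / (2 * m + 1)) := by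
  rw [sN, ← Finset.Ico_add_one_right_eq_Icc, Finset.prod_Ico_eq_prod_range]
  simp [add_comm]

lemma sN_pos (hj : j ≤ 2 * m) : 0 < sN m j := by
  rw [sN_eq_prod_range]
  refine Finset.prod_pos fun i hi =>
    div_pos (sin_mul_pi_div_pos i.succ_pos (by simp at hi; omega)) ?_
  simpa using sin_mul_pi_div_pos (j := 1) one_pos (by simp at hi; omega)

lemma log_sN (hj : j ≤ 2 * m) :
    log (sN m j) = logTwoSinSum m j - j * log (2 * sin (π / (2 * m + 1))) := by
  have hpos : ∀ i ∈ Finset.range j, 0 < sin ((i + 1 : ℕ) * π / (2 * m + 1)) := fun i hi =>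
    sin_mul_pi_div_pos i.succ_pos (by simp at hi; omega)
  have h1 : ∀ i ∈ Finset.range j, 0 < sin (π / (2 * m + 1)) := fun i hi => by
    simpa using sin_mul_pi_div_pos (j := 1) one_pos (by simp at hi; omega)
  have hconst : (j : ℝ) * log (2 * sin (π / (2 * m + 1))) =
      ∑ _i ∈ Finset.range j, log (2 * sin (π / (2 * m + 1))) := by simp
  rw [sN_eq_prod_range, log_prod fun i hi => (div_pos (hpos i hi) (h1 i hi)).ne', logTwoSinSum,
    hconst, ← Finset.sum_sub_distrib]
  refine Finset.sum_congr rfl fun i hi => ?_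
  rw [← mul_div_mul_left _ _ two_ne_zero,
    log_div (by linarith [hpos i hi]) (by linarith [h1 i hi]),
    mul_div_assoc]
  push_cast
  rfl

lemma logTwoSinSum_two_mul (m : ℕ) : logTwoSinSum m (2 * m) = log (2 * m + 1) := by
  have hne : ∀ i ∈ Finset.range (2 * m), |2 * sin ((i + 1) * π / ((2 * m : ℕ) + 1))| ≠ 0 :=
    fun i hi => by
      have := sin_mul_pi_div_pos (m := m) i.succ_pos (by simp at hi; omega)
      push_cast at this ⊢
      positivity
  have h := congrArg log (prod_abs_two_mul_sin (2 * m))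
  rw [log_prod hne] at h
  push_cast at h
  simp_rw [logTwoSinSum, ← log_abs (2 * sin _), ← mul_div_assoc, h]

lemma logTwoSinSum_two_mul_eq (m : ℕ) : logTwoSinSum m (2 * m) = 2 * logTwoSinSum m m := by
  have hrefl : ∀ i ∈ Finset.range m, log (2 * sin ((↑(m + i) + 1) * (π / (2 * m + 1)))) =
      log (2 * sin ((↑(m - 1 - i) + 1) * (π / (2 * m + 1)))) := fun i hi => by
    have hi : i < m := Finset.mem_range.1 hi
    rw [← sin_pi_sub, Nat.cast_sub (by omega), Nat.cast_sub (by omega)]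
    congr 3
    field_simp
    push_cast
    ring
  rw [logTwoSinSum, two_mul, Finset.sum_range_add, Finset.sum_congr rfl hrefl,
    Finset.sum_range_reflect (fun i => log (2 * sin ((i + 1) * (π / (2 * m + 1))))) m,
    logTwoSinSum]
  ring

lemma logTwoSinSum_self (m : ℕ) : logTwoSinSum m m = log (2 * m + 1) / 2 := by
  linarith [logTwoSinSum_two_mul m, logTwoSinSum_two_mul_eq m]

lemma add_one_mul_mem_Ioc (hj : j < m) :
    ((j : ℝ) + 1) * (π / (2 * m + 1)) ∈ Ioc 0 (π / 2) := by
  have : (j : ℝ) + 1 ≤ m := by exact_mod_cast hj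
  refine ⟨by positivity, ?_⟩
  rw [← mul_div_assoc, div_le_div_iff₀ (by positivity) two_pos]
  nlinarith [pi_pos]

/-- The quantum binomial coefficient `binom_q(m, k)` at `A = exp(πi/(2N))`. -/
noncomputable def qBinom (m k : ℕ) : ℝ := sN m m / (sN m k * sN m (m - k))

lemma qBinom_pos (hk : k ≤ m) : 0 < qBinom m k :=
  div_pos (sN_pos (by omega)) (mul_pos (sN_pos (by omega)) (sN_pos (by omega)))

lemma log_qBinom (hk : k ≤ m) :
    log (qBinom m k) = logTwoSinSum m m - logTwoSinSum m k - logTwoSinSum m (m - k) := by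
  rw [qBinom, log_div (sN_pos (by omega)).ne' (mul_pos (sN_pos (by omega)) (sN_pos (by omega))).ne',
    log_mul (sN_pos (by omega)).ne' (sN_pos (by omega)).ne', log_sN (by omega), log_sN (by omega),
    log_sN (by omega), Nat.cast_sub hk]
  ring

lemma logTwoSinSum_succ (m j : ℕ) : logTwoSinSum m (j + 1) =
    logTwoSinSum m j + log (2 * sin ((j + 1) * (π / (2 * m + 1)))) :=
  Finset.sum_range_succ _ _

lemma logTwoSinSum_succ_add_le (hk : 2 * k + 1 ≤ m) :
    logTwoSinSum m (k + 1) + logTwoSinSum m (m - (k + 1)) ≤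
      logTwoSinSum m k + logTwoSinSum m (m - k) := by
  have hle : log (2 * sin ((k + 1) * (π / (2 * m + 1)))) ≤
      log (2 * sin (((m - (k + 1) : ℕ) + 1) * (π / (2 * m + 1)))) := by
    refine monotoneOn_log_two_mul_sin (add_one_mul_mem_Ioc (by omega))
      (add_one_mul_mem_Ioc (by omega)) (mul_le_mul_of_nonneg_right ?_ (by positivity))
    have : (k : ℝ) + 1 ≤ (m - (k + 1) : ℕ) + 1 := by norm_cast; omega
    linarith
  rw [show m - k = m - (k + 1) + 1 by omega, logTwoSinSum_succ, logTwoSinSum_succ]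
  linarith

lemma logTwoSinSum_half_add_le (hk : k ≤ m) :
    logTwoSinSum m (m / 2) + logTwoSinSum m (m - m / 2) ≤
      logTwoSinSum m k + logTwoSinSum m (m - k) := by
  have hlow : ∀ k ≤ m / 2, logTwoSinSum m (m / 2) + logTwoSinSum m (m - m / 2) ≤
      logTwoSinSum m k + logTwoSinSum m (m - k) := fun k hk =>
    Nat.decreasingInduction (fun k hk ih => ih.trans (logTwoSinSum_succ_add_le (by omega)))
      le_rfl hk
  rcases le_or_gt k (m / 2) with h | h
  · exact hlow k h
  · simpa only [Nat.sub_sub_self hk, add_comm] using hlow (m - k) (by omega)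

lemma qBinom_le_qBinom_half (hk : k ≤ m) : qBinom m k ≤ qBinom m (m / 2) := by
  rw [← log_le_log_iff (qBinom_pos hk) (qBinom_pos (by omega)), log_qBinom hk,
    log_qBinom (by omega)]
  linarith [logTwoSinSum_half_add_le hk]

lemma qBinom_half_pow_le_sixjN (m : ℕ) : qBinom m (m / 2) ^ 4 ≤ sixjN m :=
  Finset.single_le_sum (f := fun k => qBinom m k ^ 4) (fun _ _ => by positivity)
    (Finset.mem_range.2 (by omega))

lemma sixjN_le_qBinom_half_pow (m : ℕ) : sixjN m ≤ (m + 1) * qBinom m (m / 2) ^ 4 := by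
  calc sixjN m ≤ ∑ _k ∈ Finset.range (m + 1), qBinom m (m / 2) ^ 4 :=
        Finset.sum_le_sum fun k hk => pow_le_pow_left₀ (qBinom_pos (by simp at hk; omega)).le
          (qBinom_le_qBinom_half (by simp at hk; omega)) 4
    _ = (m + 1) * qBinom m (m / 2) ^ 4 := by simp

lemma tendsto_pi_div : Tendsto (fun m : ℕ => π / (2 * m + 1)) atTop (𝓝 0) :=
  tendsto_const_nhds.div_atTop (tendsto_atTop_add_const_right _ 1
    (tendsto_natCast_atTop_atTop.const_mul_atTop two_pos))

lemma tendsto_mul_pi_div {k : ℕ → ℕ} (hk : ∀ m, m ≤ 2 * k m + 1 ∧ 2 * k m ≤ m + 1) :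
    Tendsto (fun m => k m * (π / (2 * m + 1))) atTop (𝓝 (π / 4)) := by
  rw [tendsto_iff_norm_sub_tendsto_zero]
  refine squeeze_zero (fun _ => norm_nonneg _) (fun m => ?_) tendsto_pi_div
  have h1 : (m : ℝ) ≤ 2 * k m + 1 := by exact_mod_cast (hk m).1
  have h2 : 2 * (k m : ℝ) ≤ m + 1 := by exact_mod_cast (hk m).2
  have hθ : 0 < π / (2 * m + 1) := by positivity
  have : k m * (π / (2 * m + 1)) - π / 4 = π / (2 * m + 1) * ((2 * k m - m) / 2 - 1 / 4) := by
    field_simp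
    ring
  rw [Real.norm_eq_abs, this, abs_mul, abs_of_pos hθ]
  exact mul_le_of_le_one_right hθ.le (abs_le.2 ⟨by linarith, by linarith⟩)

lemma tendsto_pi_div_mul_log {c : ℝ} (hc : 0 < c) :
    Tendsto (fun m : ℕ => π / (2 * m + 1) * log (c * m + 1)) atTop (𝓝 0) := by
  have hlog := (tendsto_pow_log_div_mul_add_atTop (2 / c) (1 - 2 / c) 1 (by positivity)).comp
    (tendsto_atTop_add_const_right _ 1 (tendsto_natCast_atTop_atTop.const_mul_atTop hc))
  have := hlog.const_mul π
  rw [mul_zero] at this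
  refine this.congr fun m => ?_
  have : 2 / c * (c * m + 1) + (1 - 2 / c) = 2 * m + 1 := by field_simp; ring
  simp only [Function.comp_apply, pow_one, this]
  ring

lemma tendsto_pi_div_mul_logTwoSinSum {k : ℕ → ℕ}
    (hk : ∀ m, m ≤ 2 * k m + 1 ∧ 2 * k m ≤ m + 1) :
    Tendsto (fun m => π / (2 * m + 1) * logTwoSinSum m (k m)) atTop
      (𝓝 (∫ u in (0 : ℝ)..π / 4, log (2 * sin u))) :=
  tendsto_mul_sum_of_monotoneOn monotoneOn_log_two_mul_sin
    (intervalIntegrable_log_two_mul_sin 0 (π / 2)) ⟨by positivity, by linarith [pi_pos]⟩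
    (Eventually.of_forall fun m => by positivity) tendsto_pi_div (tendsto_mul_pi_div hk)

lemma tendsto_pi_div_mul_log_qBinom_half :
    Tendsto (fun m => π / (2 * m + 1) * log (qBinom m (m / 2))) atTop
      (𝓝 (-2 * ∫ u in (0 : ℝ)..π / 4, log (2 * sin u))) := by
  have hself : Tendsto (fun m : ℕ => π / (2 * m + 1) * logTwoSinSum m m) atTop (𝓝 0) := by
    simpa [logTwoSinSum_self, mul_div_assoc] using (tendsto_pi_div_mul_log two_pos).div_const 2
  set I := ∫ u in (0 : ℝ)..π / 4, log (2 * sin u)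
  have := (hself.sub (tendsto_pi_div_mul_logTwoSinSum (k := fun m => m / 2) fun m => by omega)).sub
    (tendsto_pi_div_mul_logTwoSinSum (k := fun m => m - m / 2) fun m => by omega)
  rw [show 0 - I - I = -2 * I by ring] at this
  refine this.congr fun m => ?_
  rw [log_qBinom (by omega)]
  ring

lemma four_mul_log_qBinom_half_le (m : ℕ) : 4 * log (qBinom m (m / 2)) ≤ log (sixjN m) := by
  have := log_le_log (pow_pos (qBinom_pos (by omega)) 4) (qBinom_half_pow_le_sixjN m)
  rwa [log_pow, Nat.cast_ofNat] at this

lemma log_sixjN_le (m : ℕ) : log (sixjN m) ≤ log (m + 1) + 4 * log (qBinom m (m / 2)) := by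
  have hq := pow_pos (qBinom_pos (m := m) (k := m / 2) (by omega)) 4
  have := log_le_log (hq.trans_le (qBinom_half_pow_le_sixjN m)) (sixjN_le_qBinom_half_pow m)
  rwa [log_mul (by positivity) hq.ne', log_pow, Nat.cast_ofNat] at this

end SixJ

open SixJ in
/-- Costantino's asymptotics: `(2π/(2n+1))·log(sixj_{2n+1})` converges to
`−16·∫₀^{π/4} log(2 sin u) du`, twice the volume of the regular ideal octahedron. -/
theorem sixj_asymptotics :
    Tendsto (fun n : ℕ => 2 * Real.pi / (2 * n + 1) * Real.log (sixjN n)) atTop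
      (nhds (-16 * ∫ u in (0:ℝ)..(Real.pi / 4), Real.log (2 * Real.sin u))) := by
  set I := ∫ u in (0:ℝ)..(π / 4), log (2 * sin u)
  have hlow := tendsto_pi_div_mul_log_qBinom_half.const_mul 8
  have hup := ((tendsto_pi_div_mul_log one_pos).const_mul 2).add hlow
  rw [show 8 * (-2 * I) = -16 * I by ring] at hlow hup
  simp only [one_mul, mul_zero, zero_add] at hup
  refine tendsto_of_tendsto_of_tendsto_of_le_of_le hlow hup (fun m => ?_) (fun m => ?_)
  all_goals
    have hθ : 0 < π / (2 * m + 1) := by positivity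
    dsimp only
    rw [mul_div_assoc]
  · nlinarith [four_mul_log_qBinom_half_le m]
  · nlinarith [log_sixjN_le m]
end
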